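/- Assume moreover f' > 0 (hence g' < 0) on I. Then the coefficients of the second fundamental form of the meridian surface of parabolic type are: ⟨z_uu,n₁⟩ = 0, ⟨z_uv,n₁⟩ = 0, ⟨z_uv,n₂⟩ = 0, ⟨z_uu,n₂⟩ = (f''g' − g''f')/√(−2f'g'), ⟨z_vv,n₁⟩ = f(φφ̈ − φ² − 2φ̇²)/√(φ̇² + φ²), and ⟨z_vv,n₂⟩ = −f·√(−f'/(2g'))·(φ̇² + φ²), at every (u,v) ∈ I × J. -/

import Mathlib

/-!
Since `z(u,v) = f(u) P(v) + g(u) ξ₁` with `P = profile φ`,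
`P(v) = φ cos v e₁ + φ sin v e₂ + (φ²/2) ξ₁ + ξ₂`, the second derivatives are
`z_uu = f'' P + g'' ξ₁`, `z_uv = f' P'` and `z_vv = f P''`. In the pseudo-orthonormal frame
`(e₁, e₂, ξ₁, ξ₂)` the Minkowski product reads `aa' + bb' - (cd' + dc')`, so each coefficient
is a polynomial identity in `φ, φ̇, φ̈, cos v, sin v` modulo `sin² + cos² = 1`; the only other
input is `√(-f'/(2g')) = f'/√(-2f'g')`, valid for `f' > 0`.
-/

namespace MeridianParabolic

noncomputable section

/-- The Minkowski inner product of signature (3,1) on `ℝ⁴`: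
`⟨x,y⟩ = x₁y₁ + x₂y₂ + x₃y₃ − x₄y₄`. -/
def mink (x y : Fin 4 → ℝ) : ℝ := x 0 * y 0 + x 1 * y 1 + x 2 * y 2 - x 3 * y 3

/-- The first standard basis vector `e₁`. -/
def e1 : Fin 4 → ℝ := ![1, 0, 0, 0]

/-- The second standard basis vector `e₂`. -/
def e2 : Fin 4 → ℝ := ![0, 1, 0, 0]

/-- The lightlike vector `ξ₁ = (e₃ + e₄)/√2`. -/
def xi1 : Fin 4 → ℝ := ![0, 0, 1 / Real.sqrt 2, 1 / Real.sqrt 2]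

/-- The lightlike vector `ξ₂ = (−e₃ + e₄)/√2`. -/
def xi2 : Fin 4 → ℝ := ![0, 0, -(1 / Real.sqrt 2), 1 / Real.sqrt 2]

/-- The meridian surface of parabolic type
`z(u,v) = fφ cos v · e₁ + fφ sin v · e₂ + (fφ²/2 + g) ξ₁ + f ξ₂`. -/
def z (f g φ : ℝ → ℝ) (u v : ℝ) : Fin 4 → ℝ :=
  (f u * φ v * Real.cos v) • e1 + (f u * φ v * Real.sin v) • e2 +
    (f u * (φ v) ^ 2 / 2 + g u) • xi1 + f u • xi2

/-- The partial derivative `z_u`. -/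
def zu (f g φ : ℝ → ℝ) (u v : ℝ) : Fin 4 → ℝ := deriv (fun t => z f g φ t v) u

/-- The partial derivative `z_v`. -/
def zv (f g φ : ℝ → ℝ) (u v : ℝ) : Fin 4 → ℝ := deriv (fun t => z f g φ u t) v

/-- The second partial derivative `z_uu`. -/
def zuu (f g φ : ℝ → ℝ) (u v : ℝ) : Fin 4 → ℝ := deriv (fun t => zu f g φ t v) u

/-- The second partial derivative `z_uv`. -/
def zuv (f g φ : ℝ → ℝ) (u v : ℝ) : Fin 4 → ℝ := deriv (fun t => zu f g φ u t) v

/-- The second partial derivative `z_vv`. -/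
def zvv (f g φ : ℝ → ℝ) (u v : ℝ) : Fin 4 → ℝ := deriv (fun t => zv f g φ u t) v

/-- The normal field `n₁ = ((φ̇ sin v + φ cos v) e₁ + (−φ̇ cos v + φ sin v) e₂ + φ² ξ₁)/√(φ̇² + φ²)`. -/
def n1 (φ : ℝ → ℝ) (v : ℝ) : Fin 4 → ℝ :=
  (Real.sqrt ((deriv φ v) ^ 2 + (φ v) ^ 2))⁻¹ •
    ((deriv φ v * Real.sin v + φ v * Real.cos v) • e1 +
      (-(deriv φ v) * Real.cos v + φ v * Real.sin v) • e2 + (φ v) ^ 2 • xi1)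

/-- The normal field `n₂ = √(−f'/(2g')) (φ cos v e₁ + φ sin v e₂ + ((f'φ² − 2g')/(2f')) ξ₁ + ξ₂)`. -/
def n2 (f g φ : ℝ → ℝ) (u v : ℝ) : Fin 4 → ℝ :=
  Real.sqrt (-(deriv f u) / (2 * deriv g u)) •
    ((φ v * Real.cos v) • e1 + (φ v * Real.sin v) • e2 +
      ((deriv f u * (φ v) ^ 2 - 2 * deriv g u) / (2 * deriv f u)) • xi1 + xi2)

def frame (a b c d : ℝ) : Fin 4 → ℝ := a • e1 + b • e2 + c • xi1 + d • xi2

lemma mink_frame (a b c d a' b' c' d' : ℝ) :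
    mink (frame a b c d) (frame a' b' c' d') = a * a' + b * b' - (c * d' + d * c') := by
  have h2 : (Real.sqrt 2)⁻¹ * (Real.sqrt 2)⁻¹ = 1 / 2 := by
    rw [← mul_inv, Real.mul_self_sqrt zero_le_two, one_div]
  simp only [mink, frame, e1, e2, xi1, xi2, one_div, Matrix.smul_cons, Matrix.smul_empty,
    Matrix.add_cons, Matrix.empty_add_empty, Matrix.head_cons, Matrix.tail_cons, Matrix.cons_val,
    Matrix.cons_val_zero, Matrix.cons_val_one, Pi.add_apply, smul_eq_mul, mul_one, mul_zero,
    mul_neg, add_zero, zero_add]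
  linear_combination (-2 * c * d' - 2 * d * c') * h2

lemma mink_add_left (x y w : Fin 4 → ℝ) : mink (x + y) w = mink x w + mink y w := by
  simp only [mink, Pi.add_apply]; ring

lemma mink_smul_left (r : ℝ) (x w : Fin 4 → ℝ) : mink (r • x) w = r * mink x w := by
  simp only [mink, Pi.smul_apply, smul_eq_mul]; ring

lemma mink_smul_right (r : ℝ) (x w : Fin 4 → ℝ) : mink x (r • w) = r * mink x w := by
  simp only [mink, Pi.smul_apply, smul_eq_mul]; ring

lemma hasDerivAt_frame {a b c d : ℝ → ℝ} {a' b' c' d' t : ℝ}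
    (ha : HasDerivAt a a' t) (hb : HasDerivAt b b' t)
    (hc : HasDerivAt c c' t) (hd : HasDerivAt d d' t) :
    HasDerivAt (fun s => frame (a s) (b s) (c s) (d s)) (frame a' b' c' d') t :=
  (((ha.smul_const e1).add (hb.smul_const e2)).add (hc.smul_const xi1)).add (hd.smul_const xi2)

lemma xi1_eq_frame : xi1 = frame 0 0 1 0 := by
  simp [frame]

section Profile

variable (φ : ℝ → ℝ) (v : ℝ)

def profile : Fin 4 → ℝ :=
  frame (φ v * Real.cos v) (φ v * Real.sin v) (φ v ^ 2 / 2) 1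

def profileDeriv : Fin 4 → ℝ :=
  frame (deriv φ v * Real.cos v - φ v * Real.sin v) (deriv φ v * Real.sin v + φ v * Real.cos v)
    (φ v * deriv φ v) 0

def profileDeriv2 : Fin 4 → ℝ :=
  frame (deriv (deriv φ) v * Real.cos v - 2 * deriv φ v * Real.sin v - φ v * Real.cos v)
    (deriv (deriv φ) v * Real.sin v + 2 * deriv φ v * Real.cos v - φ v * Real.sin v)
    (deriv φ v ^ 2 + φ v * deriv (deriv φ) v) 0

variable {φ v}

lemma hasDerivAt_profile (hφ : DifferentiableAt ℝ φ v) :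
    HasDerivAt (profile φ) (profileDeriv φ v) v := by
  refine (hasDerivAt_frame (hφ.hasDerivAt.mul (Real.hasDerivAt_cos v))
    (hφ.hasDerivAt.mul (Real.hasDerivAt_sin v)) ((hφ.hasDerivAt.pow 2).div_const 2)
    (hasDerivAt_const v (1 : ℝ))).congr_deriv ?_
  unfold profileDeriv
  congr 1 <;> ring

lemma hasDerivAt_profileDeriv (hφ : DifferentiableAt ℝ φ v)
    (hφ' : DifferentiableAt ℝ (deriv φ) v) :
    HasDerivAt (profileDeriv φ) (profileDeriv2 φ v) v := by
  refine (hasDerivAt_frame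
    ((hφ'.hasDerivAt.mul (Real.hasDerivAt_cos v)).sub (hφ.hasDerivAt.mul (Real.hasDerivAt_sin v)))
    ((hφ'.hasDerivAt.mul (Real.hasDerivAt_sin v)).add (hφ.hasDerivAt.mul (Real.hasDerivAt_cos v)))
    (hφ.hasDerivAt.mul hφ'.hasDerivAt) (hasDerivAt_const v (0 : ℝ))).congr_deriv ?_
  unfold profileDeriv2
  congr 1 <;> ring

end Profile

lemma z_eq (f g φ : ℝ → ℝ) (u v : ℝ) :
    z f g φ u v = f u • profile φ v + g u • xi1 := by
  simp only [z, profile, frame]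
  module

section PartialDerivatives

variable {f g φ : ℝ → ℝ} {u v : ℝ}

lemma zu_eq (hf : DifferentiableAt ℝ f u) (hg : DifferentiableAt ℝ g u)
    (φ : ℝ → ℝ) (v : ℝ) :
    zu f g φ u v = deriv f u • profile φ v + deriv g u • xi1 := by
  simp only [zu, z_eq]
  exact ((hf.hasDerivAt.smul_const _).add (hg.hasDerivAt.smul_const _)).deriv

lemma zuu_eq (hf : ∀ᶠ t in nhds u, DifferentiableAt ℝ f t)
    (hg : ∀ᶠ t in nhds u, DifferentiableAt ℝ g t)
    (hf' : DifferentiableAt ℝ (deriv f) u) (hg' : DifferentiableAt ℝ (deriv g) u) :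
    zuu f g φ u v = deriv (deriv f) u • profile φ v + deriv (deriv g) u • xi1 := by
  have hzu : (fun t => zu f g φ t v) =ᶠ[nhds u]
      fun t => deriv f t • profile φ v + deriv g t • xi1 :=
    (hf.and hg).mono fun t ht => zu_eq ht.1 ht.2 φ v
  rw [zuu, hzu.deriv_eq]
  exact ((hf'.hasDerivAt.smul_const _).add (hg'.hasDerivAt.smul_const _)).deriv

lemma zv_eq (hφ : DifferentiableAt ℝ φ v) : zv f g φ u v = f u • profileDeriv φ v := by
  simp only [zv, z_eq]
  exact (((hasDerivAt_profile hφ).const_smul (f u)).add_const _).deriv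

lemma zuv_eq (hf : DifferentiableAt ℝ f u) (hg : DifferentiableAt ℝ g u)
    (hφ : DifferentiableAt ℝ φ v) : zuv f g φ u v = deriv f u • profileDeriv φ v := by
  simp only [zuv, zu_eq hf hg]
  exact (((hasDerivAt_profile hφ).const_smul (deriv f u)).add_const _).deriv

lemma zvv_eq (hφ : ∀ᶠ t in nhds v, DifferentiableAt ℝ φ t)
    (hφ' : DifferentiableAt ℝ (deriv φ) v) : zvv f g φ u v = f u • profileDeriv2 φ v := by
  have hzv : (fun t => zv f g φ u t) =ᶠ[nhds v] fun t => f u • profileDeriv φ t :=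
    hφ.mono fun t ht => zv_eq ht
  rw [zvv, hzv.deriv_eq]
  exact ((hasDerivAt_profileDeriv hφ.self_of_nhds hφ').const_smul (f u)).deriv

end PartialDerivatives

section NormalComponents

variable {f g φ : ℝ → ℝ} {u v : ℝ}

lemma n1_eq_frame : n1 φ v = (Real.sqrt (deriv φ v ^ 2 + φ v ^ 2))⁻¹ •
    frame (deriv φ v * Real.sin v + φ v * Real.cos v)
      (-deriv φ v * Real.cos v + φ v * Real.sin v) (φ v ^ 2) 0 := by
  simp [n1, frame]

lemma n2_eq_frame : n2 f g φ u v = Real.sqrt (-deriv f u / (2 * deriv g u)) •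
    frame (φ v * Real.cos v) (φ v * Real.sin v)
      ((deriv f u * φ v ^ 2 - 2 * deriv g u) / (2 * deriv f u)) 1 := by
  simp [n2, frame]

lemma mink_profile_n1 : mink (profile φ v) (n1 φ v) = 0 := by
  rw [n1_eq_frame, mink_smul_right, profile, mink_frame]
  linear_combination
    (Real.sqrt (deriv φ v ^ 2 + φ v ^ 2))⁻¹ * φ v ^ 2 * Real.sin_sq_add_cos_sq v

lemma mink_xi1_n1 : mink xi1 (n1 φ v) = 0 := by
  rw [n1_eq_frame, mink_smul_right, xi1_eq_frame, mink_frame]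
  ring

lemma mink_profileDeriv_n1 : mink (profileDeriv φ v) (n1 φ v) = 0 := by
  rw [n1_eq_frame, mink_smul_right, profileDeriv, mink_frame]
  ring

lemma mink_profileDeriv2_n1 : mink (profileDeriv2 φ v) (n1 φ v) =
    (φ v * deriv (deriv φ) v - φ v ^ 2 - 2 * deriv φ v ^ 2) /
      Real.sqrt (deriv φ v ^ 2 + φ v ^ 2) := by
  rw [n1_eq_frame, mink_smul_right, profileDeriv2, mink_frame, div_eq_inv_mul]
  linear_combination (Real.sqrt (deriv φ v ^ 2 + φ v ^ 2))⁻¹ *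
    (φ v * deriv (deriv φ) v - φ v ^ 2 - 2 * deriv φ v ^ 2) * Real.sin_sq_add_cos_sq v

lemma mink_profile_n2 (hf : deriv f u ≠ 0) : mink (profile φ v) (n2 f g φ u v) =
    Real.sqrt (-deriv f u / (2 * deriv g u)) * (deriv g u / deriv f u) := by
  have hcoeff : (deriv f u * φ v ^ 2 - 2 * deriv g u) / (2 * deriv f u) =
      φ v ^ 2 / 2 - deriv g u / deriv f u := by
    field_simp
  rw [n2_eq_frame, mink_smul_right, profile, mink_frame, hcoeff]
  linear_combination Real.sqrt (-deriv f u / (2 * deriv g u)) * φ v ^ 2 * Real.sin_sq_add_cos_sq v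

lemma mink_xi1_n2 : mink xi1 (n2 f g φ u v) = -Real.sqrt (-deriv f u / (2 * deriv g u)) := by
  rw [n2_eq_frame, mink_smul_right, xi1_eq_frame, mink_frame]
  ring

lemma mink_profileDeriv_n2 : mink (profileDeriv φ v) (n2 f g φ u v) = 0 := by
  rw [n2_eq_frame, mink_smul_right, profileDeriv, mink_frame]
  linear_combination Real.sqrt (-deriv f u / (2 * deriv g u)) * φ v * deriv φ v *
    Real.sin_sq_add_cos_sq v

lemma mink_profileDeriv2_n2 : mink (profileDeriv2 φ v) (n2 f g φ u v) =
    -Real.sqrt (-deriv f u / (2 * deriv g u)) * (deriv φ v ^ 2 + φ v ^ 2) := by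
  rw [n2_eq_frame, mink_smul_right, profileDeriv2, mink_frame]
  linear_combination Real.sqrt (-deriv f u / (2 * deriv g u)) *
    (φ v * deriv (deriv φ) v - φ v ^ 2) * Real.sin_sq_add_cos_sq v

end NormalComponents

lemma sqrt_neg_div_two_mul {a b : ℝ} (ha : 0 < a) (hab : 0 < -(a * b)) :
    Real.sqrt (-a / (2 * b)) = a / Real.sqrt (-2 * a * b) := by
  have hb : b ≠ 0 := by rintro rfl; simp at hab
  have h : -a / (2 * b) = a ^ 2 / (-2 * a * b) := by field_simp
  rw [h, Real.sqrt_div' _ (by linarith), Real.sqrt_sq ha.le]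

lemma eventually_differentiableAt_of_contDiffOn {f : ℝ → ℝ} {s : Set ℝ}
    (hf : ContDiffOn ℝ 2 f s) (hs : IsOpen s) {x : ℝ} (hx : x ∈ s) :
    ∀ᶠ t in nhds x, DifferentiableAt ℝ f t :=
  (hs.eventually_mem hx).mono fun t ht =>
    (hf.differentiableOn two_ne_zero t ht).differentiableAt (hs.mem_nhds ht)

lemma differentiableAt_deriv_of_contDiffOn {f : ℝ → ℝ} {s : Set ℝ}
    (hf : ContDiffOn ℝ 2 f s) (hs : IsOpen s) {x : ℝ} (hx : x ∈ s) :
    DifferentiableAt ℝ (deriv f) x :=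
  ((hf.deriv_of_isOpen hs (by norm_num)).differentiableOn one_ne_zero x hx).differentiableAt
    (hs.mem_nhds hx)

theorem statement4_general
    (I J : Set ℝ) (hIopen : IsOpen I)
    (hJopen : IsOpen J)
    (f g φ : ℝ → ℝ)
    (hf : ContDiffOn ℝ (⊤ : ℕ∞) f I) (hg : ContDiffOn ℝ (⊤ : ℕ∞) g I)
    (hφ : ContDiffOn ℝ (⊤ : ℕ∞) φ J)
    (hfg : ∀ u ∈ I, 0 < -(deriv f u * deriv g u))
    (hfd : ∀ u ∈ I, 0 < deriv f u) :
    ∀ u ∈ I, ∀ v ∈ J,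
      mink (zuu f g φ u v) (n1 φ v) = 0 ∧
      mink (zuv f g φ u v) (n1 φ v) = 0 ∧
      mink (zuv f g φ u v) (n2 f g φ u v) = 0 ∧
      mink (zuu f g φ u v) (n2 f g φ u v) =
        (deriv (deriv f) u * deriv g u - deriv (deriv g) u * deriv f u) /
          Real.sqrt (-2 * deriv f u * deriv g u) ∧
      mink (zvv f g φ u v) (n1 φ v) =
        f u * (φ v * deriv (deriv φ) v - (φ v) ^ 2 - 2 * (deriv φ v) ^ 2) /
          Real.sqrt ((deriv φ v) ^ 2 + (φ v) ^ 2) ∧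
      mink (zvv f g φ u v) (n2 f g φ u v) =
        -(f u) * Real.sqrt (-(deriv f u) / (2 * deriv g u)) *
          ((deriv φ v) ^ 2 + (φ v) ^ 2) := by
  intro u hu v hv
  have h2 : (2 : WithTop ℕ∞) ≤ ((⊤ : ℕ∞) : WithTop ℕ∞) := WithTop.coe_le_coe.2 le_top
  replace hf := hf.of_le h2
  replace hg := hg.of_le h2
  replace hφ := hφ.of_le h2
  have hfu := eventually_differentiableAt_of_contDiffOn hf hIopen hu
  have hgu := eventually_differentiableAt_of_contDiffOn hg hIopen hu
  have hφv := eventually_differentiableAt_of_contDiffOn hφ hJopen hv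
  rw [zuu_eq hfu hgu (differentiableAt_deriv_of_contDiffOn hf hIopen hu)
      (differentiableAt_deriv_of_contDiffOn hg hIopen hu),
    zuv_eq hfu.self_of_nhds hgu.self_of_nhds hφv.self_of_nhds,
    zvv_eq hφv (differentiableAt_deriv_of_contDiffOn hφ hJopen hv)]
  simp only [mink_add_left, mink_smul_left, mink_profile_n1, mink_xi1_n1, mink_profileDeriv_n1,
    mink_profileDeriv_n2, mink_profile_n2 (hfd u hu).ne', mink_xi1_n2, mink_profileDeriv2_n1,
    mink_profileDeriv2_n2, sqrt_neg_div_two_mul (hfd u hu) (hfg u hu)]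
  refine ⟨by ring, by ring, by ring, ?_, by ring, by ring⟩
  field_simp [(hfd u hu).ne']
  ring

/-- assuming `f' > 0` (hence `g' < 0`), the coefficients of the second
fundamental form of the meridian surface of parabolic type are
`⟨z_uu,n₁⟩ = 0`, `⟨z_uv,n₁⟩ = 0`, `⟨z_uv,n₂⟩ = 0`,
`⟨z_uu,n₂⟩ = (f''g' − g''f')/√(−2f'g')`,
`⟨z_vv,n₁⟩ = f(φφ̈ − φ² − 2φ̇²)/√(φ̇² + φ²)`, and
`⟨z_vv,n₂⟩ = −f·√(−f'/(2g'))·(φ̇² + φ²)`. -/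
theorem statement4
    (I J : Set ℝ) (hIopen : IsOpen I) (hIconn : IsPreconnected I)
    (hJopen : IsOpen J) (hJconn : IsPreconnected J)
    (f g φ : ℝ → ℝ)
    (hf : ContDiffOn ℝ (⊤ : ℕ∞) f I) (hg : ContDiffOn ℝ (⊤ : ℕ∞) g I)
    (hφ : ContDiffOn ℝ (⊤ : ℕ∞) φ J)
    (hfpos : ∀ u ∈ I, 0 < f u)
    (hfg : ∀ u ∈ I, 0 < -(deriv f u * deriv g u))
    (hφpos : ∀ v ∈ J, 0 < (deriv φ v) ^ 2 + (φ v) ^ 2)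
    (hfd : ∀ u ∈ I, 0 < deriv f u) (hgd : ∀ u ∈ I, deriv g u < 0) :
    ∀ u ∈ I, ∀ v ∈ J,
      mink (zuu f g φ u v) (n1 φ v) = 0 ∧
      mink (zuv f g φ u v) (n1 φ v) = 0 ∧
      mink (zuv f g φ u v) (n2 f g φ u v) = 0 ∧
      mink (zuu f g φ u v) (n2 f g φ u v) =
        (deriv (deriv f) u * deriv g u - deriv (deriv g) u * deriv f u) /
          Real.sqrt (-2 * deriv f u * deriv g u) ∧
      mink (zvv f g φ u v) (n1 φ v) =
        f u * (φ v * deriv (deriv φ) v - (φ v) ^ 2 - 2 * (deriv φ v) ^ 2) /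
          Real.sqrt ((deriv φ v) ^ 2 + (φ v) ^ 2) ∧
      mink (zvv f g φ u v) (n2 f g φ u v) =
        -(f u) * Real.sqrt (-(deriv f u) / (2 * deriv g u)) *
          ((deriv φ v) ^ 2 + (φ v) ^ 2) :=
  statement4_general I J hIopen hJopen f g φ hf hg hφ hfg hfd

end
end MeridianParabolic
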